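/- arXiv:2112.13024 — 6 statements merged into one kernel-verified Lean document; each statement's English description precedes it below -/
import Mathlib

section
/- If G is a connected graph with diameter at most 3, then the independent mutual-visibility number of G equals the independence number of G, i.e., μ_i(G) = α(G). -/
open SimpleGraph

/-- Two vertices `u v ∈ X` are `X`-visible in `G`: there is a shortest `u,v`-path
whose only vertices in `X` are `u` and `v`. -/
def VisiblePair {V : Type*} (G : SimpleGraph V) (X : Set V) (u v : V) : Prop :=
  ∃ p : G.Walk u v, p.IsPath ∧ p.length = G.dist u v ∧
    ∀ w ∈ p.support, w ∈ X → w = u ∨ w = v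

/-- `X` is a mutual-visibility set of `G`. -/
def IsMVSet {V : Type*} (G : SimpleGraph V) (X : Set V) : Prop :=
  ∀ u ∈ X, ∀ v ∈ X, u ≠ v → VisiblePair G X u v

/-- `X` is an independent set of `G`. -/
def IsIndep {V : Type*} (G : SimpleGraph V) (X : Set V) : Prop :=
  ∀ u ∈ X, ∀ v ∈ X, ¬ G.Adj u v

/-- The mutual-visibility number `μ(G)`. -/
noncomputable def mu {V : Type*} (G : SimpleGraph V) : ℕ :=
  sSup {n | ∃ X : Set V, IsMVSet G X ∧ X.ncard = n}

/-- The independent mutual-visibility number `μᵢ(G)`. -/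
noncomputable def muI {V : Type*} (G : SimpleGraph V) : ℕ :=
  sSup {n | ∃ X : Set V, IsMVSet G X ∧ IsIndep G X ∧ X.ncard = n}

/-- The independence number `α(G)`. -/
noncomputable def indepNumber {V : Type*} (G : SimpleGraph V) : ℕ :=
  sSup {n | ∃ X : Set V, IsIndep G X ∧ X.ncard = n}

/-- Splitting the walk at `w`, the two pieces have total length at most 3, so one of them is
empty or a single edge. -/
lemma SimpleGraph.Walk.mem_support_of_length_le_three {V : Type*} {G : SimpleGraph V}
    {u v w : V} (p : G.Walk u v) (hp : p.length ≤ 3) (hw : w ∈ p.support) :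
    w = u ∨ w = v ∨ G.Adj u w ∨ G.Adj w v := by
  classical
  have hsplit : (p.takeUntil w hw).length + (p.dropUntil w hw).length ≤ 3 := by
    rw [← Walk.length_append, Walk.take_spec]
    exact hp
  by_cases htake : (p.takeUntil w hw).length ≤ 1
  · rcases Nat.le_one_iff_eq_zero_or_eq_one.mp htake with h | h
    · exact Or.inl (Walk.eq_of_length_eq_zero h).symm
    · exact Or.inr (Or.inr (Or.inl (Walk.adj_of_length_eq_one h)))
  · rcases Nat.le_one_iff_eq_zero_or_eq_one.mp (by omega : (p.dropUntil w hw).length ≤ 1)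
      with h | h
    · exact Or.inr (Or.inl (Walk.eq_of_length_eq_zero h))
    · exact Or.inr (Or.inr (Or.inr (Walk.adj_of_length_eq_one h)))

lemma IsIndep.isMVSet {V : Type*} {G : SimpleGraph V} (hconn : G.Preconnected)
    (hdiam : ∀ u v : V, G.dist u v ≤ 3) {X : Set V} (hX : IsIndep G X) : IsMVSet G X := by
  intro u hu v hv _
  obtain ⟨p, hpath, hlen⟩ := (hconn u v).exists_path_of_dist
  refine ⟨p, hpath, hlen, fun w hw hwX => ?_⟩
  rcases p.mem_support_of_length_le_three (hlen ▸ hdiam u v) hw with h | h | h | h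
  · exact Or.inl h
  · exact Or.inr h
  · exact absurd h (hX u hu w hwX)
  · exact absurd h (hX w hwX v hv)

theorem stmt0_general {V : Type*} (G : SimpleGraph V) (hconn : G.Connected)
    (hdiam : ∀ u v : V, G.dist u v ≤ 3) : muI G = indepNumber G := by
  unfold muI indepNumber
  congr 1
  ext n
  constructor
  · rintro ⟨X, -, hX, hn⟩
    exact ⟨X, hX, hn⟩
  · rintro ⟨X, hX, hn⟩
    exact ⟨X, hX.isMVSet hconn.preconnected hdiam, hX, hn⟩

theorem stmt0 {V : Type*} [Fintype V] (G : SimpleGraph V) (hconn : G.Connected)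
    (hdiam : ∀ u v : V, G.dist u v ≤ 3) : muI G = indepNumber G :=
  stmt0_general G hconn hdiam
end

section
/- If G is a connected graph with at least 2 vertices and k ≥ 1, then μ(G ∘ K̄_k) = k·n(G) = μ_i(G ∘ K̄_k), where K̄_k is the edgeless graph on k vertices. -/
/-!
Every leaf of `G ∘ K̄_k` has a single neighbour, so no path passes through a leaf: any shortest
path between two leaves shows that the `k n(G)` leaves form an independent mutual-visibility set.
Conversely, a mutual-visibility set containing a vertex `u` of `G` together with a leaf at `u` is
just these two vertices, as every shortest path leaving that leaf runs through `u`; otherwise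
replacing each vertex `u` of `G` in the set by a fixed leaf at `u` is injective.
-/

open SimpleGraph

/-- The corona `G ∘ H`: disjoint union of `G` and `n(G)` copies of `H`, joining the
`v`-th vertex of `G` to every vertex of the `v`-th copy of `H`. -/
def corona {V W : Type*} (G : SimpleGraph V) (H : SimpleGraph W) :
    SimpleGraph (V ⊕ V × W) :=
  SimpleGraph.fromRel (fun x y =>
    match x, y with
    | Sum.inl u, Sum.inl v => G.Adj u v
    | Sum.inl u, Sum.inr (v, _) => u = v
    | Sum.inr (u, a), Sum.inr (v, b) => u = v ∧ H.Adj a b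
    | _, _ => False)

namespace SimpleGraph

variable {V : Type*} {G : SimpleGraph V}

theorem Walk.IsPath.exists_adj_adj_ne_of_mem_support {u v w : V} {p : G.Walk u v}
    (hp : p.IsPath) (hw : w ∈ p.support) (hwu : w ≠ u) (hwv : w ≠ v) :
    ∃ x y, G.Adj w x ∧ G.Adj w y ∧ x ≠ y := by
  induction p with
  | nil => exact absurd (by simpa using hw) hwu
  | @cons u x v hux q ih =>
    rw [Walk.cons_isPath_iff] at hp
    rw [Walk.support_cons, List.mem_cons] at hw
    rcases hw with rfl | hw
    · exact absurd rfl hwu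
    by_cases hwx : w = x
    · subst hwx
      cases q with
      | nil => exact absurd rfl hwv
      | cons hwy q' =>
        refine ⟨u, _, hux.symm, hwy, fun huy => hp.2 ?_⟩
        rw [huy, Walk.support_cons]
        exact List.mem_cons_of_mem _ q'.start_mem_support
    · exact ih hp.1 hw hwx hwv

end SimpleGraph

section MutualVisibility

variable {V : Type*} {G : SimpleGraph V} {X : Set V}

theorem isMVSet_of_subsingleton_neighborSet (hreach : ∀ x ∈ X, ∀ y ∈ X, G.Reachable x y)
    (hX : ∀ x ∈ X, (G.neighborSet x).Subsingleton) : IsMVSet G X := by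
  intro u hu v hv _
  obtain ⟨p, hp, hlen⟩ := (hreach u hu v hv).exists_path_of_dist
  refine ⟨p, hp, hlen, fun w hw hwX => ?_⟩
  by_contra! hwuv
  obtain ⟨x, y, hx, hy, hxy⟩ := hp.exists_adj_adj_ne_of_mem_support hw hwuv.1 hwuv.2
  exact hxy (hX w hwX hx hy)

theorem IsMVSet.subset_pair_of_neighborSet_subset (hX : IsMVSet G X) {x y : V} (hx : x ∈ X)
    (hy : y ∈ X) (hxy : G.neighborSet x ⊆ {y}) : X ⊆ {x, y} := by
  intro z hz
  by_cases hzx : z = x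
  · exact Or.inl hzx
  obtain ⟨p, -, -, hvis⟩ := hX x hx z hz (Ne.symm hzx)
  cases p with
  | nil => exact absurd rfl hzx
  | cons hxw q =>
    obtain rfl : _ = y := hxy hxw
    rcases hvis _ (List.mem_cons_of_mem _ q.start_mem_support) hy with rfl | rfl
    · exact (hxw.ne rfl).elim
    · exact Or.inr rfl

end MutualVisibility

section Corona

variable {V W : Type*} {G : SimpleGraph V} {H : SimpleGraph W}

@[simp] theorem corona_adj_inl_inl {u v : V} :
    (corona G H).Adj (.inl u) (.inl v) ↔ G.Adj u v := by
  simp only [corona, fromRel_adj]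
  exact ⟨fun ⟨_, h⟩ => h.elim id .symm, fun h => ⟨by simpa using h.ne, .inl h⟩⟩

@[simp] theorem corona_adj_inl_inr {u v : V} {b : W} :
    (corona G H).Adj (.inl u) (.inr (v, b)) ↔ u = v := by
  simp [corona, fromRel_adj]

@[simp] theorem corona_adj_inr_inl {u v : V} {a : W} :
    (corona G H).Adj (.inr (u, a)) (.inl v) ↔ v = u := by
  rw [adj_comm, corona_adj_inl_inr]

@[simp] theorem corona_adj_inr_inr {u v : V} {a b : W} :
    (corona G H).Adj (.inr (u, a)) (.inr (v, b)) ↔ u = v ∧ H.Adj a b := by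
  simp only [corona, fromRel_adj, ne_eq, Sum.inr.injEq, Prod.mk.injEq]
  constructor
  · rintro ⟨-, h | ⟨rfl, h⟩⟩
    exacts [h, ⟨rfl, h.symm⟩]
  · rintro ⟨rfl, h⟩
    exact ⟨fun ⟨_, hab⟩ => h.ne hab, .inl ⟨rfl, h⟩⟩

variable (G H) in
def coronaInl : G →g corona G H :=
  ⟨Sum.inl, corona_adj_inl_inl.2⟩

theorem corona_reachable_inr_inr (hconn : G.Connected) (u v : V) (a b : W) :
    (corona G H).Reachable (.inr (u, a)) (.inr (v, b)) :=
  (corona_adj_inr_inl.2 rfl).reachable.trans <|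
    ((hconn u v).map (coronaInl G H)).trans (corona_adj_inl_inr.2 rfl).reachable

theorem corona_bot_neighborSet_inr (u : V) (a : W) :
    (corona G (⊥ : SimpleGraph W)).neighborSet (.inr (u, a)) = {.inl u} := by
  ext (v | ⟨v, b⟩) <;> simp [eq_comm]

theorem isMVSet_corona_bot_range_inr (hconn : G.Connected) :
    IsMVSet (corona G (⊥ : SimpleGraph W)) (Set.range .inr) := by
  refine isMVSet_of_subsingleton_neighborSet ?_ ?_
  · rintro _ ⟨⟨u, a⟩, rfl⟩ _ ⟨⟨v, b⟩, rfl⟩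
    exact corona_reachable_inr_inr hconn u v a b
  · rintro _ ⟨⟨u, a⟩, rfl⟩
    rw [corona_bot_neighborSet_inr]
    exact Set.subsingleton_singleton

theorem isIndep_corona_bot_range_inr :
    IsIndep (corona G (⊥ : SimpleGraph W)) (Set.range .inr) := by
  rintro _ ⟨⟨u, a⟩, rfl⟩ _ ⟨⟨v, b⟩, rfl⟩
  simp

theorem IsMVSet.ncard_le_of_corona_bot [Finite V] [Finite W] (h2 : 2 ≤ Nat.card (V × W))
    {X : Set (V ⊕ V × W)} (hX : IsMVSet (corona G (⊥ : SimpleGraph W)) X) :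
    X.ncard ≤ Nat.card (V × W) := by
  by_cases hpair : ∃ u a, .inl u ∈ X ∧ .inr (u, a) ∈ X
  · obtain ⟨u, a, hu, ha⟩ := hpair
    have hsub := hX.subset_pair_of_neighborSet_subset ha hu (corona_bot_neighborSet_inr u a).le
    calc X.ncard ≤ ({.inr (u, a), .inl u} : Set (V ⊕ V × W)).ncard := Set.ncard_le_ncard hsub
      _ = 2 := Set.ncard_pair Sum.inr_ne_inl
      _ ≤ Nat.card (V × W) := h2
  · simp only [not_exists, not_and] at hpair
    obtain ⟨⟨-, a₀⟩⟩ : Nonempty (V × W) := ((Nat.card_pos_iff (α := V × W)).1 (by omega)).1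
    calc X.ncard ≤ (Set.univ : Set (V × W)).ncard := by
          refine Set.ncard_le_ncard_of_injOn (Sum.elim (·, a₀) id) (fun _ _ => trivial) ?_
          rintro (x | ⟨x, c⟩) hx (y | ⟨y, d⟩) hy hxy <;>
            simp only [Sum.elim_inl, Sum.elim_inr, id, Prod.mk.injEq] at hxy
          · rw [hxy.1]
          · exact absurd (hxy.1 ▸ hxy.2 ▸ hy) (hpair x a₀ hx)
          · exact absurd (hxy.1 ▸ hxy.2 ▸ hx) (hpair y a₀ hy)
          · rw [hxy.1, hxy.2]
      _ = Nat.card (V × W) := Set.ncard_univ _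

end Corona

theorem stmt4 {V : Type*} [Fintype V] (G : SimpleGraph V) (hconn : G.Connected)
    (h2 : 2 ≤ Fintype.card V) (k : ℕ) (hk : 1 ≤ k) :
    mu (corona G (⊥ : SimpleGraph (Fin k))) = k * Fintype.card V ∧
    muI (corona G (⊥ : SimpleGraph (Fin k))) = k * Fintype.card V := by
  have hcard : Nat.card (V × Fin k) = k * Fintype.card V := by simp [mul_comm]
  have hle {X} (hX : IsMVSet (corona G (⊥ : SimpleGraph (Fin k))) X) :
      X.ncard ≤ k * Fintype.card V :=
    hcard ▸ hX.ncard_le_of_corona_bot (hcard ▸ by nlinarith)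
  have hleaves : (Set.range (Sum.inr : V × Fin k → V ⊕ V × Fin k)).ncard = k * Fintype.card V :=
    (Set.ncard_range_of_injective Sum.inr_injective).trans hcard
  have hMV := isMVSet_corona_bot_range_inr (W := Fin k) hconn
  exact ⟨IsGreatest.csSup_eq ⟨⟨_, hMV, hleaves⟩, fun _ ⟨_, hX, hn⟩ => hn ▸ hle hX⟩,
    IsGreatest.csSup_eq
      ⟨⟨_, hMV, isIndep_corona_bot_range_inr, hleaves⟩, fun _ ⟨_, hX, _, hn⟩ => hn ▸ hle hX⟩⟩
end

section
/- For all graphs G and H, μ(G □ H) ≤ min{μ(G)·n(H), μ(H)·n(G)}, where □ denotes the Cartesian product of graphs. -/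
/-! Distances in `G □ H` add over the coordinates, so a shortest path between two vertices of a
layer `V × {b}` never leaves that layer, and its projection to `G` is a shortest path of `G`.
Hence every layer of a mutual-visibility set of `G □ H` is a mutual-visibility set of `G`, and
summing over the `n(H)` layers gives `μ(G □ H) ≤ μ(G) · n(H)`; the other bound follows from
`G □ H ≃g H □ G`. -/

open SimpleGraph

namespace SimpleGraph

variable {V V' W : Type*} {G : SimpleGraph V} {G' : SimpleGraph V'} {H : SimpleGraph W}

lemma Reachable.dist_boxProd {x y : V × W} (h : (G □ H).Reachable x y) :
    (G □ H).dist x y = G.dist x.1 y.1 + H.dist x.2 y.2 := by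
  obtain ⟨hG, hH⟩ := reachable_boxProd.1 h
  have := edist_boxProd (G := G) (H := H) x y
  rw [← h.coe_dist_eq_edist, ← hG.coe_dist_eq_edist, ← hH.coe_dist_eq_edist] at this
  exact_mod_cast this

lemma Walk.dist_add_dist_le_length {u v w : V} (p : G.Walk u v) (hw : w ∈ p.support) :
    G.dist u w + G.dist w v ≤ p.length := by
  obtain ⟨q, r, rfl⟩ := p.mem_support_iff_exists_append.1 hw
  rw [Walk.length_append]
  exact add_le_add (dist_le q) (dist_le r)

lemma Walk.support_ofBoxProdLeft_subset [DecidableEq W] [DecidableRel G.Adj] {x y : V × W}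
    (p : (G □ H).Walk x y) : p.ofBoxProdLeft.support ⊆ p.support.map Prod.fst := by
  induction p with
  | nil => simp [Walk.ofBoxProdLeft]
  | @cons x z y hxz p ih =>
    unfold Walk.ofBoxProdLeft Or.by_cases
    split_ifs with hG
    · simpa using List.cons_subset_cons _ ih
    · obtain ⟨a, b⟩ := x
      obtain ⟨c, d⟩ := z
      obtain rfl : a = c := (hxz.resolve_left hG).2
      exact List.subset_cons_of_subset _ ih

lemma Walk.snd_eq_of_length_eq_dist {u v : V} {b : W} (p : (G □ H).Walk (u, b) (v, b))
    (hp : p.length = (G □ H).dist (u, b) (v, b)) {z : V × W} (hz : z ∈ p.support) : z.2 = b := by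
  obtain ⟨q, r, rfl⟩ := p.mem_support_iff_exists_append.1 hz
  have hsum := (q.append r).dist_add_dist_le_length hz
  rw [hp, q.reachable.dist_boxProd, r.reachable.dist_boxProd, (q.append r).reachable.dist_boxProd,
    dist_self] at hsum
  have htri := (reachable_boxProd.1 q.reachable).1.dist_triangle_left v
  have hbz : H.dist b z.2 = 0 := by dsimp only at hsum htri; omega
  exact ((reachable_boxProd.1 q.reachable).2.dist_eq_zero_iff.1 hbz).symm

lemma Hom.dist_map_le (f : G →g G') {u v : V} (h : G.Reachable u v) :
    G'.dist (f u) (f v) ≤ G.dist u v := by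
  obtain ⟨p, hp⟩ := h.exists_walk_length_eq_dist
  simpa [hp] using dist_le (p.map f)

lemma Iso.dist_eq (e : G ≃g G') (u v : V) : G'.dist (e u) (e v) = G.dist u v := by
  by_cases h : G.Reachable u v
  · refine le_antisymm (e.toHom.dist_map_le h) ?_
    simpa using e.symm.toHom.dist_map_le (e.reachable_iff.2 h)
  · rw [dist_eq_zero_of_not_reachable h, dist_eq_zero_of_not_reachable (mt e.reachable_iff.1 h)]

end SimpleGraph

section

variable {V V' W : Type*} {G : SimpleGraph V} {G' : SimpleGraph V'} {H : SimpleGraph W}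

lemma IsMVSet.boxProd_layer {X : Set (V × W)} (hX : IsMVSet (G □ H) X) (b : W) :
    IsMVSet G {a | (a, b) ∈ X} := by
  classical
  intro u hu v hv huv
  obtain ⟨p, -, hlen, hvis⟩ := hX (u, b) hu (v, b) hv (by simpa using huv)
  have hq : p.ofBoxProdLeft.length = G.dist u v := by
    have hp : p.length = G.dist u v := by
      rw [hlen, p.reachable.dist_boxProd, dist_self, add_zero]
    have := p.length_boxProd
    have : G.dist u v ≤ p.ofBoxProdLeft.length := dist_le _
    omega
  refine ⟨p.ofBoxProdLeft, p.ofBoxProdLeft.isPath_of_length_eq_dist hq, hq, fun a ha haX => ?_⟩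
  obtain ⟨z, hz, rfl⟩ := List.mem_map.1 (p.support_ofBoxProdLeft_subset ha)
  have hzb : z.2 = b := p.snd_eq_of_length_eq_dist hlen hz
  rcases hvis z hz (by rwa [← hzb] at haX) with rfl | rfl <;> simp

lemma IsMVSet.image_iso {X : Set V} (hX : IsMVSet G X) (e : G ≃g G') : IsMVSet G' (e '' X) := by
  rintro _ ⟨u, hu, rfl⟩ _ ⟨v, hv, rfl⟩ huv
  obtain ⟨p, hp, hlen, hvis⟩ := hX u hu v hv (ne_of_apply_ne e huv)
  refine ⟨p.map e.toHom, hp.map e.injective, by simp [hlen, e.dist_eq], fun w hw hwX => ?_⟩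
  obtain ⟨z, hz, rfl⟩ := List.mem_map.1 (p.support_map e.toHom ▸ hw)
  rcases hvis z hz (e.injective.mem_set_image.1 hwX) with rfl | rfl <;> simp

lemma Set.ncard_le_mul_card_of_ncard_layer_le [Finite V] [Fintype W] (X : Set (V × W)) {m : ℕ}
    (hm : ∀ b, {a | (a, b) ∈ X}.ncard ≤ m) : X.ncard ≤ m * Fintype.card W := by
  have hX : X = ⋃ b, (·, b) '' {a | (a, b) ∈ X} := by ext ⟨a, b⟩; simp
  calc X.ncard = (⋃ b, (·, b) '' {a | (a, b) ∈ X}).ncard := by rw [← hX]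
    _ ≤ ∑ b, ((·, b) '' {a | (a, b) ∈ X}).ncard := Set.ncard_iUnion_le_of_fintype _
    _ ≤ ∑ b, {a | (a, b) ∈ X}.ncard :=
      Finset.sum_le_sum fun b _ => Set.ncard_image_le (Set.toFinite _)
    _ ≤ ∑ _b : W, m := Finset.sum_le_sum fun b _ => hm b
    _ = m * Fintype.card W := by simp [mul_comm]

lemma le_mu [Finite V] {X : Set V} (hX : IsMVSet G X) : X.ncard ≤ mu G :=
  le_csSup ⟨Nat.card V, by rintro _ ⟨Y, -, rfl⟩; exact Set.ncard_le_card Y⟩ ⟨X, hX, rfl⟩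

lemma mu_le {m : ℕ} (h : ∀ X, IsMVSet G X → X.ncard ≤ m) : mu G ≤ m :=
  csSup_le ⟨0, ∅, fun _ h => h.elim, Set.ncard_empty _⟩ (by rintro _ ⟨X, hX, rfl⟩; exact h X hX)

lemma mu_le_of_iso [Finite V'] (e : G ≃g G') : mu G ≤ mu G' :=
  mu_le fun X hX => by simpa [Set.ncard_image_of_injective X e.injective] using le_mu (hX.image_iso e)

lemma mu_boxProd_le [Finite V] [Fintype W] : mu (G □ H) ≤ mu G * Fintype.card W :=
  mu_le fun X hX => Set.ncard_le_mul_card_of_ncard_layer_le X fun b => le_mu (hX.boxProd_layer b)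

end

theorem stmt5_general {V W : Type*} [Fintype V] [Fintype W] (G : SimpleGraph V)
    (H : SimpleGraph W) :
    mu (G.boxProd H) ≤ min (mu G * Fintype.card W) (mu H * Fintype.card V) :=
  le_min mu_boxProd_le ((mu_le_of_iso (boxProdComm G H)).trans mu_boxProd_le)

theorem stmt5 {V W : Type*} [Fintype V] [Fintype W] (G : SimpleGraph V)
    (H : SimpleGraph W) (hG : G.Connected) (hH : H.Connected) :
    mu (G.boxProd H) ≤ min (mu G * Fintype.card W) (mu H * Fintype.card V) :=
  stmt5_general G H
end

section
/- Let r, s ≥ 2 and X ⊆ V(K_r □ K_s). Then X is a mutual-visibility set of K_r □ K_s if and only if |X ∩ V(C)| ≤ 3 for every induced 4-cycle C of K_r □ K_s. -/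
open SimpleGraph

/-! In the rook's graph `K_r □ K_s`, two vertices in the same row or column are adjacent and
hence always visible. Two vertices `(i, k)`, `(j, l)` with `i ≠ j`, `k ≠ l` are at distance 2,
and their only common neighbours are the other two corners `(j, k)`, `(i, l)` of the rectangle
they span; so they are visible exactly when one of these corners lies outside `X`. -/

variable {α β : Type*}

section Visibility

variable {V : Type*} {G : SimpleGraph V} {X : Set V} {u v : V}

lemma visiblePair_of_adj (h : G.Adj u v) : VisiblePair G X u v :=
  ⟨.cons h .nil, by simp [h.ne], by simp [dist_eq_one_iff_adj.mpr h], by simp⟩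

lemma visiblePair_iff_of_dist_eq_two (h : G.dist u v = 2) :
    VisiblePair G X u v ↔ ∃ w ∉ X, G.Adj u w ∧ G.Adj w v := by
  constructor
  · rintro ⟨p, -, hlen, hX⟩
    rw [h] at hlen
    match p, hlen with
    | .cons (v := w) huw (.cons hwv .nil), _ =>
      refine ⟨w, fun hw => ?_, huw, hwv⟩
      rcases hX w (by simp) hw with rfl | rfl
      · exact huw.ne rfl
      · exact hwv.ne rfl
  · rintro ⟨w, hw, huw, hwv⟩
    have huv : u ≠ v := by rintro rfl; simp at h
    refine ⟨.cons huw (.cons hwv .nil), ?_, by simp [h], ?_⟩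
    · simp [huw.ne, hwv.ne, huv]
    · simp only [Walk.support_cons, Walk.support_nil, List.mem_cons, List.not_mem_nil]
      rintro x (rfl | rfl | rfl | h) hx
      exacts [.inl rfl, absurd hx hw, .inr rfl, h.elim]

end Visibility

lemma Set.ncard_inter_lt_ncard_iff {s t : Set α} (ht : t.Finite) :
    (s ∩ t).ncard < t.ncard ↔ ¬ t ⊆ s := by
  refine ⟨fun hlt hts => ?_, fun h => Set.ncard_lt_ncard (Set.inter_ssubset_right_iff.mpr h) ht⟩
  rw [Set.inter_eq_right.mpr hts] at hlt
  exact hlt.false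

section Rook

lemma top_boxProd_top_adj {x y : α × β} :
    ((⊤ : SimpleGraph α) □ (⊤ : SimpleGraph β)).Adj x y ↔
      x.1 ≠ y.1 ∧ x.2 = y.2 ∨ x.2 ≠ y.2 ∧ x.1 = y.1 := by
  simp [boxProd_adj]

lemma top_boxProd_top_dist_eq_two {x y : α × β} (h₁ : x.1 ≠ y.1) (h₂ : x.2 ≠ y.2) :
    ((⊤ : SimpleGraph α) □ (⊤ : SimpleGraph β)).dist x y = 2 := by
  simp [SimpleGraph.dist, edist_boxProd, edist_top_of_ne h₁, edist_top_of_ne h₂,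
    one_add_one_eq_two]

variable {X : Set (α × β)} {i j : α} {k l : β}

lemma top_boxProd_top_adj_and_adj_iff (hij : i ≠ j) (hkl : k ≠ l) {w : α × β} :
    ((⊤ : SimpleGraph α) □ (⊤ : SimpleGraph β)).Adj (i, k) w ∧
        ((⊤ : SimpleGraph α) □ (⊤ : SimpleGraph β)).Adj w (j, l) ↔
      w = (j, k) ∨ w = (i, l) := by
  obtain ⟨a, b⟩ := w
  simp only [top_boxProd_top_adj, Prod.mk.injEq]
  grind

lemma visiblePair_top_boxProd_top_iff (hij : i ≠ j) (hkl : k ≠ l) :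
    VisiblePair ((⊤ : SimpleGraph α) □ (⊤ : SimpleGraph β)) X (i, k) (j, l) ↔
      (j, k) ∉ X ∨ (i, l) ∉ X := by
  have hdist := top_boxProd_top_dist_eq_two (x := (i, k)) (y := (j, l)) hij hkl
  simp only [visiblePair_iff_of_dist_eq_two hdist, top_boxProd_top_adj_and_adj_iff hij hkl]
  simp [and_or_left, exists_or]

lemma ncard_rectangle (hij : i ≠ j) (hkl : k ≠ l) :
    ({(i, k), (j, k), (j, l), (i, l)} : Set (α × β)).ncard = 4 := by
  refine Set.ncard_eq_four.mpr ⟨_, _, _, _, ?_, ?_, ?_, ?_, ?_, ?_, rfl⟩ <;>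
    simp [hij, hkl, hij.symm]

lemma ncard_inter_rectangle_le_three_iff (hij : i ≠ j) (hkl : k ≠ l) :
    (X ∩ {(i, k), (j, k), (j, l), (i, l)}).ncard ≤ 3 ↔
      ¬ {(i, k), (j, k), (j, l), (i, l)} ⊆ X := by
  rw [← Set.ncard_inter_lt_ncard_iff (Set.toFinite _), ncard_rectangle hij hkl, Nat.lt_succ_iff]

end Rook

theorem stmt11_general (r s : ℕ) (X : Set (Fin r × Fin s)) :
    IsMVSet ((⊤ : SimpleGraph (Fin r)).boxProd (⊤ : SimpleGraph (Fin s))) X ↔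
    ∀ (i j : Fin r) (k l : Fin s), i ≠ j → k ≠ l →
      (X ∩ {(i, k), (j, k), (j, l), (i, l)}).ncard ≤ 3 := by
  constructor
  · intro hX i j k l hij hkl
    rw [ncard_inter_rectangle_le_three_iff hij hkl]
    intro hR
    have hvis := hX (i, k) (hR (by simp)) (j, l) (hR (by simp)) (by simp [hij])
    rw [visiblePair_top_boxProd_top_iff hij hkl] at hvis
    exact hvis.elim (· (hR (by simp))) (· (hR (by simp)))
  · rintro hR ⟨i, k⟩ hik ⟨j, l⟩ hjl hne
    by_cases hadj : ((⊤ : SimpleGraph (Fin r)) □ (⊤ : SimpleGraph (Fin s))).Adj (i, k) (j, l)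
    · exact visiblePair_of_adj hadj
    obtain ⟨hij, hkl⟩ : i ≠ j ∧ k ≠ l := by
      simp only [top_boxProd_top_adj, ne_eq, Prod.mk.injEq] at hadj hne
      tauto
    rw [visiblePair_top_boxProd_top_iff hij hkl]
    by_contra! hjk_il
    refine (ncard_inter_rectangle_le_three_iff hij hkl).mp (hR i j k l hij hkl) ?_
    simp [Set.insert_subset_iff, hik, hjl, hjk_il]

theorem stmt11 (r s : ℕ) (hr : 2 ≤ r) (hs : 2 ≤ s) (X : Set (Fin r × Fin s)) :
    IsMVSet ((⊤ : SimpleGraph (Fin r)).boxProd (⊤ : SimpleGraph (Fin s))) X ↔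
    ∀ (i j : Fin r) (k l : Fin s), i ≠ j → k ≠ l →
      (X ∩ {(i, k), (j, k), (j, l), (i, l)}).ncard ≤ 3 :=
  stmt11_general r s X
end

section
/- If G' is an isometric subgraph of a connected graph G, then μ(G) ≥ μ(G'). -/
open SimpleGraph

/-! An isometric embedding maps shortest paths of `G'` to shortest paths of `G`, and by
injectivity no new vertex of the image of `X` appears on them; so the image of a
mutual-visibility set of `G'` is a mutual-visibility set of `G` of the same size. -/

namespace SimpleGraph

variable {V V' : Type*} {G : SimpleGraph V} {G' : SimpleGraph V'}

theorem VisiblePair.map {X : Set V'} {a b : V'} (φ : G' →g G) (hinj : Function.Injective φ)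
    (hdist : G.dist (φ a) (φ b) = G'.dist a b) (h : VisiblePair G' X a b) :
    VisiblePair G (φ '' X) (φ a) (φ b) := by
  obtain ⟨p, hpath, hlen, hvis⟩ := h
  refine ⟨p.map φ, hpath.map hinj, by rw [Walk.length_map, hlen, hdist], ?_⟩
  rintro _ hw ⟨x, hx, rfl⟩
  rw [Walk.support_map, List.mem_map] at hw
  obtain ⟨y, hy, hyx⟩ := hw
  obtain rfl := hinj hyx
  exact (hvis y hy hx).imp (congrArg φ) (congrArg φ)

theorem IsMVSet.image {X : Set V'} (φ : G' →g G) (hinj : Function.Injective φ)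
    (hdist : ∀ a b, G.dist (φ a) (φ b) = G'.dist a b) (hX : IsMVSet G' X) :
    IsMVSet G (φ '' X) := by
  rintro _ ⟨a, ha, rfl⟩ _ ⟨b, hb, rfl⟩ hab
  exact (hX a ha b hb (ne_of_apply_ne φ hab)).map φ hinj (hdist a b)

theorem ncard_le_mu [Finite V] {X : Set V} (hX : IsMVSet G X) : X.ncard ≤ mu G := by
  refine le_csSup ⟨Nat.card V, ?_⟩ ⟨X, hX, rfl⟩
  rintro _ ⟨Y, -, rfl⟩
  exact Set.ncard_le_card Y

theorem mu_le_mu_of_isometric [Finite V] (φ : G' →g G) (hinj : Function.Injective φ)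
    (hdist : ∀ a b, G.dist (φ a) (φ b) = G'.dist a b) : mu G' ≤ mu G := by
  refine csSup_le ⟨0, ∅, fun _ h ↦ h.elim, Set.ncard_empty V'⟩ ?_
  rintro _ ⟨X, hX, rfl⟩
  rw [← Set.ncard_image_of_injective X hinj]
  exact ncard_le_mu (hX.image φ hinj hdist)

end SimpleGraph

theorem stmt14_general {V V' : Type*} [Fintype V] (G : SimpleGraph V)
    (G' : SimpleGraph V') (f : V' ↪ V)
    (hadj : ∀ a b, G'.Adj a b → G.Adj (f a) (f b))
    (hiso : ∀ a b, G'.dist a b = G.dist (f a) (f b)) : mu G' ≤ mu G :=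
  mu_le_mu_of_isometric ⟨f, hadj _ _⟩ f.injective fun a b ↦ (hiso a b).symm

theorem stmt14 {V V' : Type*} [Fintype V] [Fintype V'] (G : SimpleGraph V)
    (G' : SimpleGraph V') (hG : G.Connected) (hG' : G'.Connected) (f : V' ↪ V)
    (hadj : ∀ a b, G'.Adj a b → G.Adj (f a) (f b))
    (hiso : ∀ a b, G'.dist a b = G.dist (f a) (f b)) : mu G' ≤ mu G :=
  stmt14_general G G' f hadj hiso
end

section
/- For every cycle C_k with k ≥ 6, μ(C_k) = 3 = μ_i(C_k): there exist three pairwise nonadjacent vertices forming a mutual-visibility set, and no mutual-visibility set of size 4 exists. -/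
open SimpleGraph

/-! Four vertices of `C_k` in cyclic order `a < b < c < d` cannot be mutually visible: removing
`b` and `d` separates `a` from `c`, so every `a`–`c` walk meets `X` in its interior.
Conversely, `dist u v = min ((v - u) mod k) ((u - v) mod k)`, so three vertices that cut the
cycle into arcs of length at most `k / 2` see each other along these arcs; for `k ≥ 6` the
vertices `0, ⌊k/3⌋, ⌊2k/3⌋` do this with arcs of length at least `2`, hence are independent. -/

lemma Fin.val_sub_eq_ite {k : ℕ} (a b : Fin k) :
    (a - b).val = if b.val ≤ a.val then a.val - b.val else k + a.val - b.val := by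
  split_ifs with h
  · exact Fin.sub_val_of_le h
  · exact Fin.coe_sub_iff_lt.mpr (not_le.mp h)

lemma SimpleGraph.Walk.le_add_length_of_adj {V : Type*} {G : SimpleGraph V} (f : V → ℕ)
    (hf : ∀ a b, G.Adj a b → f b ≤ f a + 1) {u v : V} (p : G.Walk u v) :
    f v ≤ f u + p.length := by
  induction p with
  | nil => simp
  | cons h _ ih =>
    have := hf _ _ h
    rw [Walk.length_cons]
    omega

lemma VisiblePair.symm {V : Type*} {G : SimpleGraph V} {X : Set V} {u v : V}
    (h : VisiblePair G X u v) : VisiblePair G X v u := by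
  obtain ⟨p, hp, hlen, hX⟩ := h
  refine ⟨p.reverse, hp.reverse, by rw [Walk.length_reverse, hlen, dist_comm], fun w hw hwX => ?_⟩
  rw [Walk.support_reverse, List.mem_reverse] at hw
  exact (hX w hw hwX).symm

section cycle

variable {k : ℕ}

lemma cycleGraph_adj_val {u v : Fin k} (h : (cycleGraph k).Adj u v) :
    u.val + 1 = v.val ∨ v.val + 1 = u.val ∨
      (u.val = 0 ∧ v.val + 1 = k) ∨ (v.val = 0 ∧ u.val + 1 = k) := by
  have := u.isLt
  have := v.isLt
  rw [cycleGraph_adj', Fin.val_sub_eq_ite, Fin.val_sub_eq_ite] at h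
  split_ifs at h <;> omega

lemma mem_Ioo_of_cycleGraph_walk {b d u v : Fin k} (p : (cycleGraph k).Walk u v)
    (hb : b ∉ p.support) (hd : d ∉ p.support) (hu : u ∈ Set.Ioo b d) : v ∈ Set.Ioo b d := by
  induction p with
  | nil => exact hu
  | @cons u w v h q ih =>
    simp only [Walk.support_cons, List.mem_cons, not_or] at hb hd
    refine ih hb.2 hd.2 ?_
    have hwb : w.val ≠ b.val := Fin.val_ne_of_ne fun h => hb.2 (h ▸ q.start_mem_support)
    have hwd : w.val ≠ d.val := Fin.val_ne_of_ne fun h => hd.2 (h ▸ q.start_mem_support)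
    have := d.isLt
    obtain ⟨hbu, hud⟩ := hu
    rcases cycleGraph_adj_val h with h | h | h | h <;> constructor <;> omega

theorem IsMVSet.ncard_le_three {X : Set (Fin k)} (hX : IsMVSet (cycleGraph k) X) :
    X.ncard ≤ 3 := by
  classical
  by_contra! h4
  rw [Set.ncard_eq_toFinset_card'] at h4
  obtain ⟨s, hsX, hs⟩ := Finset.exists_subset_card_eq (Nat.succ_le_of_lt h4)
  set f := s.orderEmbOfFin hs
  have hfX (i : Fin 4) : f i ∈ X := Set.mem_toFinset.mp (hsX (s.orderEmbOfFin_mem hs i))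
  have hf01 : f 0 < f 1 := f.strictMono (by decide)
  have hf12 : f 1 < f 2 := f.strictMono (by decide)
  have hf23 : f 2 < f 3 := f.strictMono (by decide)
  obtain ⟨p, -, -, hpX⟩ := hX (f 2) (hfX 2) (f 0) (hfX 0) (hf01.trans hf12).ne'
  have hf1 : f 1 ∉ p.support := fun h => by
    rcases hpX _ h (hfX 1) with h | h
    exacts [hf12.ne h, hf01.ne' h]
  have hf3 : f 3 ∉ p.support := fun h => by
    rcases hpX _ h (hfX 3) with h | h
    exacts [hf23.ne' h, (hf01.trans (hf12.trans hf23)).ne' h]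
  exact (mem_Ioo_of_cycleGraph_walk p hf1 hf3 ⟨hf12, hf23⟩).1.not_gt hf01

lemma isIndep_cycleGraph_triple {a b c : Fin k} (hab : a.val + 1 < b.val)
    (hbc : b.val + 1 < c.val) (hca : c.val + 1 < k + a.val) :
    IsIndep (cycleGraph k) {a, b, c} := by
  have := c.isLt
  rintro x (rfl | rfl | rfl) y (rfl | rfl | rfl) hxy <;> have := cycleGraph_adj_val hxy <;> omega

variable [NeZero k]

open Fin.NatCast

lemma exists_walk_length_eq_val_sub (u v : Fin k) :
    ∃ p : (cycleGraph k).Walk u v, p.length = (v - u).val ∧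
      ∀ w ∈ p.support, (w - u).val ≤ (v - u).val := by
  suffices h : ∀ L : ℕ, L < k → ∃ p : (cycleGraph k).Walk u (u + (L : Fin k)), p.length = L ∧
      ∀ w ∈ p.support, (w - u).val ≤ L by
    have hv := h _ (v - u).isLt
    rwa [Fin.cast_val_eq_self, add_sub_cancel] at hv
  intro L hL
  induction L with
  | zero => exact ⟨Walk.nil.copy rfl (by simp), by simp, by simp⟩
  | succ L ih =>
    obtain ⟨p, hlen, hsupp⟩ := ih (by omega)
    have hadj : (cycleGraph k).Adj (u + (L : Fin k)) (u + ((L + 1 : ℕ) : Fin k)) := by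
      rw [cycleGraph_adj', Nat.cast_succ, ← add_assoc, add_sub_cancel_left, Fin.val_one',
        Nat.mod_eq_of_lt (by omega)]
      simp
    refine ⟨p.concat hadj, by simp [hlen], fun w hw => ?_⟩
    rw [Walk.support_concat, List.mem_append, List.mem_singleton] at hw
    rcases hw with hw | rfl
    · exact (hsupp w hw).trans L.le_succ
    · rw [add_sub_cancel_left, Fin.val_cast_of_lt hL]

theorem cycleGraph_dist (u v : Fin k) :
    (cycleGraph k).dist u v = min (v - u).val (u - v).val := by
  apply le_antisymm
  · obtain ⟨p, hp, -⟩ := exists_walk_length_eq_val_sub u v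
    obtain ⟨q, hq, -⟩ := exists_walk_length_eq_val_sub v u
    exact le_min (hp ▸ dist_le p) (dist_comm (G := cycleGraph k) ▸ hq ▸ dist_le q)
  · obtain ⟨p, hp⟩ := (cycleGraph_preconnected u v).exists_walk_length_eq_dist
    -- the circular distance to `u` changes by at most one along an edge
    have := p.le_add_length_of_adj (fun w => min (w - u).val (u - w).val) fun a b hab => by
      have := cycleGraph_adj_val hab
      have := u.isLt
      have := a.isLt
      have := b.isLt
      simp only [Fin.val_sub_eq_ite]
      split_ifs <;> omega
    simpa [hp] using this

lemma visiblePair_cycleGraph {X : Set (Fin k)} {u v : Fin k} (huv : (v - u).val ≤ (u - v).val)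
    (hX : ∀ x ∈ X, x ≠ u → (v - u).val ≤ (x - u).val) : VisiblePair (cycleGraph k) X u v := by
  obtain ⟨p, hlen, hp⟩ := exists_walk_length_eq_val_sub u v
  have hdist : p.length = (cycleGraph k).dist u v := by
    rw [hlen, cycleGraph_dist, min_eq_left huv]
  refine ⟨p, p.isPath_of_length_eq_dist hdist, hdist, fun w hw hwX => ?_⟩
  by_cases hwu : w = u
  · exact Or.inl hwu
  · exact Or.inr (sub_left_injective (Fin.ext ((hp w hw).antisymm (hX w hwX hwu))))

lemma isMVSet_cycleGraph_triple {a b c : Fin k} (hab : a < b) (hbc : b < c)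
    (hab2 : 2 * (b.val - a.val) ≤ k) (hbc2 : 2 * (c.val - b.val) ≤ k)
    (hca2 : 2 * (k + a.val - c.val) ≤ k) : IsMVSet (cycleGraph k) {a, b, c} := by
  have := c.isLt
  obtain ⟨vab, vbc, vca⟩ : VisiblePair (cycleGraph k) {a, b, c} a b ∧
      VisiblePair (cycleGraph k) {a, b, c} b c ∧ VisiblePair (cycleGraph k) {a, b, c} c a := by
    refine ⟨visiblePair_cycleGraph ?_ ?_, visiblePair_cycleGraph ?_ ?_,
      visiblePair_cycleGraph ?_ ?_⟩ <;> try rintro x (rfl | rfl | rfl) hx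
    all_goals simp only [Fin.val_sub_eq_ite]; split_ifs <;> omega
  rintro x (rfl | rfl | rfl) y (rfl | rfl | rfl) hxy
  all_goals first
    | exact absurd rfl hxy
    | assumption
    | exact VisiblePair.symm ‹_›

end cycle

theorem exists_isMVSet_isIndep_cycleGraph {k : ℕ} (hk : 6 ≤ k) :
    ∃ X : Set (Fin k), IsMVSet (cycleGraph k) X ∧ IsIndep (cycleGraph k) X ∧ X.ncard = 3 := by
  have : NeZero k := ⟨by omega⟩
  obtain ⟨a, ha⟩ : ∃ a : Fin k, a.val = 0 := ⟨⟨0, by omega⟩, rfl⟩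
  obtain ⟨b, hb⟩ : ∃ b : Fin k, b.val = k / 3 := ⟨⟨k / 3, by omega⟩, rfl⟩
  obtain ⟨c, hc⟩ : ∃ c : Fin k, c.val = 2 * k / 3 := ⟨⟨2 * k / 3, by omega⟩, rfl⟩
  refine ⟨{a, b, c}, isMVSet_cycleGraph_triple ?_ ?_ ?_ ?_ ?_, isIndep_cycleGraph_triple ?_ ?_ ?_,
    Set.ncard_eq_three.mpr ⟨a, b, c, ?_, ?_, ?_, rfl⟩⟩ <;> omega

theorem stmt19 (k : ℕ) (hk : 6 ≤ k) :
    mu (SimpleGraph.cycleGraph k) = 3 ∧ muI (SimpleGraph.cycleGraph k) = 3 ∧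
    (∃ X : Set (Fin k), IsMVSet (SimpleGraph.cycleGraph k) X ∧
      IsIndep (SimpleGraph.cycleGraph k) X ∧ X.ncard = 3) ∧
    ¬ ∃ X : Set (Fin k), IsMVSet (SimpleGraph.cycleGraph k) X ∧ X.ncard = 4 := by
  obtain ⟨X, hmv, hind, hcard⟩ := exists_isMVSet_isIndep_cycleGraph hk
  refine ⟨IsGreatest.csSup_eq ⟨⟨X, hmv, hcard⟩, ?_⟩,
    IsGreatest.csSup_eq ⟨⟨X, hmv, hind, hcard⟩, ?_⟩, ⟨X, hmv, hind, hcard⟩,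
    fun ⟨Y, hY, hY4⟩ => by have := hY.ncard_le_three; omega⟩
  · rintro n ⟨Y, hY, rfl⟩
    exact hY.ncard_le_three
  · rintro n ⟨Y, hY, -, rfl⟩
    exact hY.ncard_le_three
end
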